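/- arXiv:2205.10847 — 2 statements merged into one kernel-verified Lean document; each statement's English description precedes it below -/
import Mathlib

section
/- If Φ is a bistochastic channel on a finite-dimensional Hilbert space (both Φ and its Heisenberg dual Φ* are trace-preserving and unital completely positive maps) and Φ*(H) = H for a self-adjoint operator H, then Φ*(H^k) = H^k for all natural numbers k. -/
open Matrix Kronecker ComplexOrder

/-- Completely positive map, via Kraus representation (equivalent in finite dimension). -/
def IsCP {d : Type*} [Fintype d] [DecidableEq d]
    (Φ : Matrix d d ℂ → Matrix d d ℂ) : Prop :=
  ∃ (m : ℕ) (K : Fin m → Matrix d d ℂ), ∀ A, Φ A = ∑ i, K i * A * (K i)ᴴ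

/-- Trace-preserving map. -/
def IsTP {d : Type*} [Fintype d] [DecidableEq d]
    (Φ : Matrix d d ℂ → Matrix d d ℂ) : Prop :=
  ∀ A, (Φ A).trace = A.trace

/-- Unital map. -/
def IsUnital {d : Type*} [Fintype d] [DecidableEq d]
    (Φ : Matrix d d ℂ → Matrix d d ℂ) : Prop :=
  Φ 1 = 1

/-- `Φd` is the Heisenberg dual of `Φ`, defined by trace duality. -/
def IsDual {d : Type*} [Fintype d] [DecidableEq d]
    (Φ Φd : Matrix d d ℂ → Matrix d d ℂ) : Prop :=
  ∀ A B, (A * Φ B).trace = (Φd A * B).trace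

/-!
Write `Φd X = ∑ Kᵢ X Kᵢᴴ`. Unitality and `Φd H = H` give
`∑ [Kᵢ, H] [Kᵢ, H]ᴴ = Φd (H ^ 2) - H ^ 2`, whose trace vanishes because `Φd` preserves traces.
A sum of positive semidefinite matrices with zero trace is zero, so every Kraus operator commutes
with `H`, hence with each `H ^ k`, and unitality then gives `Φd (H ^ k) = H ^ k`.
-/

theorem Matrix.eq_zero_of_trace_sum_mul_conjTranspose_self_eq_zero
    {ι m n R : Type*} [Fintype m] [Fintype n] [PartialOrder R] [Ring R] [StarRing R]
    [StarOrderedRing R] [NoZeroDivisors R] [IsOrderedAddMonoid R]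
    {s : Finset ι} {A : ι → Matrix m n R} (h : (∑ i ∈ s, A i * (A i)ᴴ).trace = 0) :
    ∀ i ∈ s, A i = 0 := by
  rw [trace_sum, Finset.sum_eq_zero_iff_of_nonneg
    fun i _ => (posSemidef_self_mul_conjTranspose (A i)).trace_nonneg] at h
  exact fun i hi => trace_mul_conjTranspose_self_eq_zero_iff.mp (h i hi)

section Kraus

variable {d ι R : Type*} [Fintype d] [Fintype ι]

def krausMap [Semiring R] [StarRing R] (K : ι → Matrix d d R) (X : Matrix d d R) :
    Matrix d d R :=
  ∑ i, K i * X * (K i)ᴴ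

theorem krausMap_one [DecidableEq d] [Semiring R] [StarRing R] (K : ι → Matrix d d R) :
    krausMap K 1 = ∑ i, K i * (K i)ᴴ := by
  simp only [krausMap, mul_one]

theorem sum_commutator_mul_conjTranspose [DecidableEq d] [Ring R] [StarRing R]
    (K : ι → Matrix d d R) {H : Matrix d d R} (hH : H.IsHermitian) :
    ∑ i, (K i * H - H * K i) * (K i * H - H * K i)ᴴ =
      krausMap K (H ^ 2) - krausMap K H * H - H * krausMap K H + H * krausMap K 1 * H := by
  have expand : ∀ i, (K i * H - H * K i) * (K i * H - H * K i)ᴴ =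
      K i * H ^ 2 * (K i)ᴴ - K i * H * (K i)ᴴ * H - H * (K i * H * (K i)ᴴ)
        + H * (K i * (K i)ᴴ) * H := by
    intro i
    rw [conjTranspose_sub, conjTranspose_mul, conjTranspose_mul, hH.eq]
    noncomm_ring
  simp only [Finset.sum_congr rfl fun i _ => expand i, Finset.sum_add_distrib,
    Finset.sum_sub_distrib, ← Finset.sum_mul, ← Finset.mul_sum, krausMap_one]
  rfl

theorem commute_of_krausMap_eq_self [DecidableEq d] {K : ι → Matrix d d ℂ}
    (hTP : IsTP (krausMap K)) (hU : krausMap K 1 = 1)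
    {H : Matrix d d ℂ} (hH : H.IsHermitian) (hfix : krausMap K H = H) (i : ι) :
    Commute (K i) H := by
  have hdefect :
      ∑ i, (K i * H - H * K i) * (K i * H - H * K i)ᴴ = krausMap K (H ^ 2) - H ^ 2 := by
    rw [sum_commutator_mul_conjTranspose K hH, hfix, hU, mul_one]
    noncomm_ring
  have htrace : (∑ i, (K i * H - H * K i) * (K i * H - H * K i)ᴴ).trace = 0 := by
    rw [hdefect, trace_sub, hTP, sub_self]
  exact sub_eq_zero.mp (eq_zero_of_trace_sum_mul_conjTranspose_self_eq_zero htrace i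
    (Finset.mem_univ i))

theorem krausMap_eq_self_of_commute [DecidableEq d] [Semiring R] [StarRing R]
    {K : ι → Matrix d d R} (hU : krausMap K 1 = 1) {X : Matrix d d R}
    (hX : ∀ i, Commute (K i) X) : krausMap K X = X := by
  calc krausMap K X = X * krausMap K 1 := by
        rw [krausMap_one, Finset.mul_sum]
        exact Finset.sum_congr rfl fun i _ => by rw [(hX i).eq, mul_assoc]
    _ = X := by rw [hU, mul_one]

end Kraus

theorem thermal_dual_fixes_all_powers_general {n : ℕ}
    (Φd : Matrix (Fin n) (Fin n) ℂ → Matrix (Fin n) (Fin n) ℂ)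
    (hdCP : IsCP Φd) (hdTP : IsTP Φd) (hdU : IsUnital Φd)
    (H : Matrix (Fin n) (Fin n) ℂ) (hH : H.IsHermitian)
    (hfix : Φd H = H) :
    ∀ k : ℕ, Φd (H ^ k) = H ^ k := by
  obtain ⟨m, K, hK⟩ := hdCP
  obtain rfl : Φd = krausMap K := funext hK
  intro k
  exact krausMap_eq_self_of_commute hdU fun i =>
    (commute_of_krausMap_eq_self hdTP hdU hH hfix i).pow_right k

/-- If `Φ` is a bistochastic channel (both `Φ` and its Heisenberg dual `Φd`
are trace-preserving and unital completely positive maps) on a finite-dimensional space and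
`Φd H = H` for a self-adjoint `H`, then `Φd (H^k) = H^k` for all `k : ℕ`. -/
theorem thermal_dual_fixes_all_powers {n : ℕ}
    (Φ Φd : Matrix (Fin n) (Fin n) ℂ → Matrix (Fin n) (Fin n) ℂ)
    (hCP : IsCP Φ) (hTP : IsTP Φ) (hU : IsUnital Φ)
    (hdCP : IsCP Φd) (hdTP : IsTP Φd) (hdU : IsUnital Φd)
    (hDual : IsDual Φ Φd)
    (H : Matrix (Fin n) (Fin n) ℂ) (hH : H.IsHermitian)
    (hfix : Φd H = H) :
    ∀ k : ℕ, Φd (H ^ k) = H ^ k :=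
  thermal_dual_fixes_all_powers_general Φd hdCP hdTP hdU H hH hfix
end

section
/- If Φ is a bistochastic channel on a finite-dimensional Hilbert space with Φ*(H) = H for a self-adjoint operator H, then Φ is time-translation covariant with respect to H: Φ(e^{-itH} ρ e^{itH}) = e^{-itH} Φ(ρ) e^{itH} for all operators ρ and all real t. -/
open Matrix Kronecker ComplexOrder

/-- The unitary one-parameter group `e^{-itH}`. -/
noncomputable def timeEv {d : Type*} [Fintype d] [DecidableEq d]
    (H : Matrix d d ℂ) (t : ℝ) : Matrix d d ℂ :=
  NormedSpace.exp ((-(Complex.I * t)) • H)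

/-- The inverse unitary `e^{itH}`. -/
noncomputable def timeEvInv {d : Type*} [Fintype d] [DecidableEq d]
    (H : Matrix d d ℂ) (t : ℝ) : Matrix d d ℂ :=
  NormedSpace.exp ((Complex.I * t) • H)

/-!
Trace duality turns Kraus operators `Kᵢ` of `Φ*` into Kraus operators `Kᵢᴴ` of `Φ`. Since `Φ*`
is unital and fixes `H`, `∑ [H, Kᵢ] [H, Kᵢ]ᴴ = Φ*(H²) - H²`, whose trace vanishes because `Φ*`
is trace preserving; a sum of positive semidefinite matrices with zero trace is zero, so every
`Kᵢ` commutes with `H`, hence with `e^{±itH}`, and the conjugation by `e^{-itH}` passes through `Φ`.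
-/

namespace Matrix

variable {d ι : Type*} [Fintype d] [Fintype ι]

section

attribute [local instance] Matrix.linftyOpNormedRing Matrix.linftyOpNormedAlgebra

theorem commute_exp_left [DecidableEq d] {A B : Matrix d d ℂ} (h : Commute A B) :
    Commute (NormedSpace.exp A) B :=
  h.exp_left

end

theorem sum_conjTranspose_mul_mul_of_commute {R : Type*} [Semiring R] [StarRing R]
    (K : ι → Matrix d d R) {U V : Matrix d d R}
    (hU : ∀ i, Commute U (K i)ᴴ) (hV : ∀ i, Commute V (K i)) (ρ : Matrix d d R) :
    ∑ i, (K i)ᴴ * (U * ρ * V) * K i = U * (∑ i, (K i)ᴴ * ρ * K i) * V := by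
  rw [Finset.mul_sum, Finset.sum_mul]
  refine Finset.sum_congr rfl fun i _ => ?_
  calc (K i)ᴴ * (U * ρ * V) * K i = ((K i)ᴴ * U) * ρ * (V * K i) := by
        simp only [Matrix.mul_assoc]
    _ = (U * (K i)ᴴ) * ρ * (K i * V) := by rw [(hU i).eq, (hV i).eq]
    _ = U * ((K i)ᴴ * ρ * K i) * V := by simp only [Matrix.mul_assoc]

theorem sum_commutator_mul_conjTranspose [DecidableEq d] {R : Type*} [CommRing R] [StarRing R]
    (K : ι → Matrix d d R) {H : Matrix d d R} (hH : H.IsHermitian)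
    (hunital : ∑ i, K i * (K i)ᴴ = 1) (hfix : ∑ i, K i * H * (K i)ᴴ = H) :
    ∑ i, (H * K i - K i * H) * (H * K i - K i * H)ᴴ
      = ∑ i, K i * (H * H) * (K i)ᴴ - H * H := by
  have expand : ∀ i, (H * K i - K i * H) * (H * K i - K i * H)ᴴ
      = H * (K i * (K i)ᴴ) * H - H * (K i * H * (K i)ᴴ)
        - K i * H * (K i)ᴴ * H + K i * (H * H) * (K i)ᴴ := fun i => by
    simp only [conjTranspose_sub, conjTranspose_mul, hH.eq]
    noncomm_ring
  simp only [expand, Finset.sum_add_distrib, Finset.sum_sub_distrib, ← Finset.mul_sum,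
    ← Finset.sum_mul, hunital, hfix]
  noncomm_ring

end Matrix

variable {d ι : Type*} [Fintype d] [DecidableEq d] [Fintype ι]

theorem IsDual.eq_sum_conjTranspose_mul_mul {Φ Φd : Matrix d d ℂ → Matrix d d ℂ}
    {K : ι → Matrix d d ℂ} (hDual : IsDual Φ Φd) (hK : ∀ A, Φd A = ∑ i, K i * A * (K i)ᴴ)
    (B : Matrix d d ℂ) : Φ B = ∑ i, (K i)ᴴ * B * K i := by
  refine ext_iff_trace_mul_left.mpr fun A => ?_
  rw [hDual, hK, Finset.sum_mul, Finset.mul_sum, trace_sum, trace_sum]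
  refine Finset.sum_congr rfl fun i _ => ?_
  simp only [Matrix.mul_assoc]
  rw [trace_mul_comm (K i), Matrix.mul_assoc, Matrix.mul_assoc]

theorem commute_kraus_of_map_eq_self {Φd : Matrix d d ℂ → Matrix d d ℂ} {K : ι → Matrix d d ℂ}
    (hK : ∀ A, Φd A = ∑ i, K i * A * (K i)ᴴ) (hTP : IsTP Φd) (hU : IsUnital Φd)
    {H : Matrix d d ℂ} (hH : H.IsHermitian) (hfix : Φd H = H) (i : ι) :
    Commute H (K i) := by
  set X : ι → Matrix d d ℂ := fun i => H * K i - K i * H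
  have hunital : ∑ i, K i * (K i)ᴴ = 1 := by
    rw [← (hU : Φd 1 = 1), hK]
    simp only [Matrix.mul_one]
  have hsum : ∑ i, (X i * (X i)ᴴ).trace = 0 := by
    rw [← trace_sum, sum_commutator_mul_conjTranspose K hH hunital (by rw [← hK, hfix]),
      ← hK, trace_sub, hTP, sub_self]
  have hX : X i = 0 := trace_mul_conjTranspose_self_eq_zero_iff.mp <|
    (Finset.sum_eq_zero_iff_of_nonneg fun j _ =>
      (posSemidef_self_mul_conjTranspose (X j)).trace_nonneg).mp hsum i (Finset.mem_univ i)
  exact sub_eq_zero.mp hX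

theorem bistochastic_time_translation_covariant_general {n : ℕ}
    (Φ Φd : Matrix (Fin n) (Fin n) ℂ → Matrix (Fin n) (Fin n) ℂ)
    (hdCP : IsCP Φd) (hdTP : IsTP Φd) (hdU : IsUnital Φd)
    (hDual : IsDual Φ Φd)
    (H : Matrix (Fin n) (Fin n) ℂ) (hH : H.IsHermitian)
    (hfix : Φd H = H) :
    ∀ (ρ : Matrix (Fin n) (Fin n) ℂ) (t : ℝ),
      Φ (timeEv H t * ρ * timeEvInv H t) = timeEv H t * Φ ρ * timeEvInv H t := by
  obtain ⟨m, K, hK⟩ := hdCP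
  have hcomm := commute_kraus_of_map_eq_self hK hdTP hdU hH hfix
  have hcomm_star : ∀ i, Commute H (K i)ᴴ := fun i => by
    simpa only [star_eq_conjTranspose, hH.eq] using (hcomm i).star_star
  intro ρ t
  simp only [hDual.eq_sum_conjTranspose_mul_mul hK]
  exact sum_conjTranspose_mul_mul_of_commute K
    (fun i => commute_exp_left ((hcomm_star i).smul_left _))
    (fun i => commute_exp_left ((hcomm i).smul_left _)) ρ

/-- A bistochastic channel whose dual fixes a self-adjoint `H` is
time-translation covariant: `Φ(e^{-itH} ρ e^{itH}) = e^{-itH} Φ(ρ) e^{itH}`. -/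
theorem bistochastic_time_translation_covariant {n : ℕ}
    (Φ Φd : Matrix (Fin n) (Fin n) ℂ → Matrix (Fin n) (Fin n) ℂ)
    (hCP : IsCP Φ) (hTP : IsTP Φ) (hU : IsUnital Φ)
    (hdCP : IsCP Φd) (hdTP : IsTP Φd) (hdU : IsUnital Φd)
    (hDual : IsDual Φ Φd)
    (H : Matrix (Fin n) (Fin n) ℂ) (hH : H.IsHermitian)
    (hfix : Φd H = H) :
    ∀ (ρ : Matrix (Fin n) (Fin n) ℂ) (t : ℝ),
      Φ (timeEv H t * ρ * timeEvInv H t) = timeEv H t * Φ ρ * timeEvInv H t :=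
  bistochastic_time_translation_covariant_general Φ Φd hdCP hdTP hdU hDual H hH hfix
end
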